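/- Let G be a finite directed multigraph in which every vertex has at least one outgoing edge. Then lim_{n→∞} P(v,n)^{1/n} = 1 for every vertex v if and only if every pair of different cycles of G have disjoint vertex sets. Moreover, in this case P(v,n) grows at most polynomially in n for every vertex v. -/

import Mathlib

/-- A finite directed multigraph: finitely many vertices, finitely many directed edges
(multiple edges between the same ordered pair of vertices are allowed). -/
structure DMGraph where
  V : Type
  E : Type
  fintV : Fintype V
  fintE : Fintype E
  src : E → V
  tgt : E → V

attribute [instance] DMGraph.fintV DMGraph.fintE

namespace DMGraph

/-- `G.Path v w p` : the list of edges `p` is a path from `v` to `w`. -/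
inductive Path (G : DMGraph) : G.V → G.V → List G.E → Prop
  | nil (v : G.V) : Path G v v []
  | cons (e : G.E) {w : G.V} {p : List G.E} :
      Path G (G.tgt e) w p → Path G (G.src e) w (e :: p)

/-- `P(v,n)`: the number of different paths of length exactly `n` starting at `v`. -/
noncomputable def P (G : DMGraph) (v : G.V) (n : ℕ) : ℕ :=
  Nat.card {p : List G.E // p.length = n ∧ ∃ w, G.Path v w p}

/-- A cycle through `w`, written with base point `w`: a nonempty closed path from `w`
to `w` visiting no vertex twice (the visited vertices are the sources of its edges).
The cycles of `G` are pairwise vertex-disjoint exactly when every vertex `w` carries at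
most one such based closed path. -/
def IsCycleAt (G : DMGraph) (w : G.V) (p : List G.E) : Prop :=
  p ≠ [] ∧ G.Path w w p ∧ (p.map G.src).Nodup

end DMGraph

/-! If two different cycles `c₁ ≠ c₂` pass through `w`, the closed paths `c₁ ++ c₂` and
`c₂ ++ c₁` differ and have the same length `L`, so free words in them give `2 ^ k` paths of
length `k * L` from `w` and `P(w, n) ^ (1 / n)` stays above `2 ^ (1 / L)` along `n = k * L`.

Conversely, if every vertex lies on at most one cycle, an edge from which one can return to its
source must be the first edge of the cycle through that source; hence two closed paths at `v`
of the same length coincide. Cutting a path from `v` at its last visit to `v` leaves a closed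
path (determined by its length), an edge, and a path avoiding `v`; induction on the set of
allowed vertices bounds `P(v, n)` by `((|E| + 1) (n + 1)) ^ |V|`, and `P(v, n) ≥ 1` squeezes
`P(v, n) ^ (1 / n)` to `1`. -/

open Filter Topology

theorem List.eq_of_flatMap_eq {α β : Type*} {f : α → List β} (hf : f.Injective)
    (hlen : ∀ a b, (f a).length = (f b).length) :
    ∀ {l₁ l₂ : List α}, l₁.length = l₂.length → l₁.flatMap f = l₂.flatMap f → l₁ = l₂
  | [], [], _, _ => rfl
  | a :: l₁, b :: l₂, hl, h => by
    rw [List.flatMap_cons, List.flatMap_cons] at h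
    obtain ⟨hab, h⟩ := List.append_inj h (hlen a b)
    rw [hf hab, List.eq_of_flatMap_eq hf hlen (by simpa using hl) h]

theorem le_one_of_tendsto_rpow_one_div {u : ℕ → ℝ}
    (hu : Tendsto (fun n : ℕ => u n ^ (1 / (n : ℝ))) atTop (𝓝 1)) {a : ℝ} (ha : 0 < a)
    {L : ℕ} (hL : 0 < L) (h : ∀ k, a ^ k ≤ u (k * L)) : a ≤ 1 := by
  have hlim := hu.comp (tendsto_atTop_mono (fun k => Nat.le_mul_of_pos_right k hL) tendsto_id)
  have hle : a ^ (1 / (L : ℝ)) ≤ 1 := by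
    refine ge_of_tendsto hlim (eventually_ge_atTop 1 |>.mono fun k hk => ?_)
    have hk : (k : ℝ) ≠ 0 := by positivity
    calc a ^ (1 / (L : ℝ)) = (a ^ k) ^ (1 / ((k * L : ℕ) : ℝ)) := by
          rw [← Real.rpow_natCast, ← Real.rpow_mul ha.le]
          push_cast
          field_simp
      _ ≤ u (k * L) ^ (1 / ((k * L : ℕ) : ℝ)) := by gcongr; exact h k
  by_contra! ha1
  exact hle.not_gt (Real.one_lt_rpow ha1 (by positivity))

theorem tendsto_rpow_one_div_of_le_mul_pow {u : ℕ → ℝ} (h1 : ∀ n, 1 ≤ u n) {C : ℝ} {d : ℕ}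
    (hC : ∀ n, 1 ≤ n → u n ≤ C * (n : ℝ) ^ d) :
    Tendsto (fun n : ℕ => u n ^ (1 / (n : ℝ))) atTop (𝓝 1) := by
  have hC0 : 0 < C := by have := (h1 1).trans (hC 1 le_rfl); simp at this; linarith
  have hinv : Tendsto (fun n : ℕ => 1 / (n : ℝ)) atTop (𝓝 0) := tendsto_one_div_atTop_nhds_zero_nat
  have hroot : Tendsto (fun n : ℕ => (n : ℝ) ^ (1 / (n : ℝ))) atTop (𝓝 1) :=
    tendsto_rpow_div.comp tendsto_natCast_atTop_atTop
  have hupper : Tendsto (fun n : ℕ => C ^ (1 / (n : ℝ)) * ((n : ℝ) ^ (1 / (n : ℝ))) ^ d)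
      atTop (𝓝 1) := by
    simpa using (tendsto_const_nhds.rpow hinv (Or.inl hC0.ne')).mul (hroot.pow d)
  refine tendsto_of_tendsto_of_tendsto_of_le_of_le' tendsto_const_nhds hupper
    (Eventually.of_forall fun n => Real.one_le_rpow (h1 n) (by positivity))
    (eventually_ge_atTop 1 |>.mono fun n hn => ?_)
  calc u n ^ (1 / (n : ℝ)) ≤ (C * (n : ℝ) ^ d) ^ (1 / (n : ℝ)) := by
        gcongr
        · linarith [h1 n]
        · exact hC n hn
    _ = _ := by rw [Real.mul_rpow hC0.le (by positivity), ← Real.rpow_pow_comm (by positivity)]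

namespace DMGraph

open Finset

variable {G : DMGraph} {A : Finset G.V} {u v w : G.V} {e : G.E} {p q c₁ c₂ : List G.E} {n : ℕ}

def CyclesDisjoint (G : DMGraph) : Prop :=
  ∀ (w : G.V) (c₁ c₂ : List G.E), G.IsCycleAt w c₁ → G.IsCycleAt w c₂ → c₁ = c₂

namespace Path

theorem nil_iff : G.Path v w [] ↔ v = w :=
  ⟨fun h => by cases h; rfl, fun h => h ▸ nil v⟩

theorem cons_iff : G.Path v w (e :: p) ↔ G.src e = v ∧ G.Path (G.tgt e) w p :=
  ⟨fun h => by cases h; exact ⟨rfl, by assumption⟩, fun ⟨he, h⟩ => he ▸ h.cons e⟩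

theorem append_iff : G.Path v w (p ++ q) ↔ ∃ u, G.Path v u p ∧ G.Path u w q := by
  induction p generalizing v with
  | nil => simp [nil_iff]
  | cons e p ih => simp [cons_iff, ih, and_assoc]

theorem append (hp : G.Path v u p) (hq : G.Path u w q) : G.Path v w (p ++ q) :=
  append_iff.2 ⟨u, hp, hq⟩

theorem flatMap {α : Type*} {f : α → List G.E} (hf : ∀ a, G.Path v v (f a)) :
    ∀ l : List α, G.Path v v (l.flatMap f)
  | [] => nil v
  | a :: l => (hf a).append (flatMap hf l)

theorem tgt_unique (hp : G.Path v w p) (hp' : G.Path v u p) : w = u := by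
  induction hp with
  | nil => exact nil_iff.1 hp'
  | cons e _ ih => exact ih (cons_iff.1 hp').2

theorem src_mem_map_src (hp : G.Path v w p) (hne : p ≠ []) : v ∈ p.map G.src := by
  cases hp with
  | nil => exact absurd rfl hne
  | cons e _ => exact List.mem_map_of_mem List.mem_cons_self

/-- The vertices visited by `q` are its sources followed by `w`, so the conclusion says that `q`
is simple. -/
theorem exists_simple (hp : G.Path v w p) :
    ∃ q, G.Path v w q ∧ (w :: q.map G.src).Nodup := by
  induction hp with
  | nil v => exact ⟨[], nil v, List.nodup_singleton v⟩
  | @cons e w p _ ih =>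
    obtain ⟨q, hq, hnd⟩ := ih
    by_cases hw : G.src e = w
    · exact ⟨[], hw ▸ nil _, List.nodup_singleton _⟩
    by_cases hmem : G.src e ∈ q.map G.src
    · obtain ⟨f, hf, hfe⟩ := List.mem_map.1 hmem
      obtain ⟨a, b, rfl⟩ := List.append_of_mem hf
      obtain ⟨u, -, hfb⟩ := append_iff.1 hq
      refine ⟨f :: b, hfe ▸ (cons_iff.1 hfb).1 ▸ hfb, hnd.sublist ?_⟩
      exact ((List.sublist_append_right a _).map G.src).cons_cons w
    · refine ⟨e :: q, hq.cons e, ?_⟩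
      rw [List.nodup_cons] at hnd
      simp only [List.map_cons, List.nodup_cons, List.mem_cons, not_or]
      exact ⟨⟨Ne.symm hw, hnd.1⟩, hmem, hnd.2⟩

theorem last_visit (hp : G.Path v w p) (x : G.V) :
    (∀ e ∈ p, G.tgt e ≠ x) ∨
      ∃ c r, p = c ++ r ∧ G.Path v x c ∧ G.Path x w r ∧ ∀ e ∈ r, G.tgt e ≠ x := by
  induction hp with
  | nil => exact Or.inl (by simp)
  | @cons e w p hp ih =>
    rcases ih with h | ⟨c, r, rfl, hc, hr, hx⟩
    · by_cases he : G.tgt e = x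
      · exact Or.inr ⟨[e], p, rfl, he ▸ (nil _).cons e, he ▸ hp, h⟩
      · exact Or.inl (by simpa [he] using h)
    · exact Or.inr ⟨e :: c, r, rfl, hc.cons e, hr, hx⟩

theorem exists_eq_closed_append (hp : G.Path v w p) :
    ∃ c r, p = c ++ r ∧ G.Path v v c ∧ G.Path v w r ∧ ∀ e ∈ r, G.tgt e ≠ v := by
  rcases hp.last_visit v with h | h
  · exact ⟨[], p, rfl, nil v, hp, h⟩
  · exact h

end Path

theorem exists_path (hout : ∀ v : G.V, ∃ e : G.E, G.src e = v) (v : G.V) (n : ℕ) :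
    ∃ p w, p.length = n ∧ G.Path v w p := by
  induction n generalizing v with
  | zero => exact ⟨[], v, rfl, Path.nil v⟩
  | succ n ih =>
    obtain ⟨e, rfl⟩ := hout v
    obtain ⟨p, w, hlen, hp⟩ := ih (G.tgt e)
    exact ⟨e :: p, w, by simp [hlen], hp.cons e⟩

theorem isCycleAt_cons (hq : G.Path (G.tgt e) (G.src e) q)
    (hnd : (G.src e :: q.map G.src).Nodup) : G.IsCycleAt (G.src e) (e :: q) :=
  ⟨List.cons_ne_nil e q, hq.cons e, hnd⟩

theorem IsCycleAt.eq_of_prefix (h₁ : G.IsCycleAt w c₁) (h₂ : G.IsCycleAt w c₂)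
    (h : c₁ <+: c₂) : c₁ = c₂ := by
  obtain ⟨_ | ⟨e, r⟩, rfl⟩ := h
  · simp
  exfalso
  obtain ⟨u, hu, hr⟩ := Path.append_iff.1 h₂.2.1
  obtain rfl := h₁.2.1.tgt_unique hu
  have hnd := h₂.2.2
  rw [List.map_append, List.nodup_append] at hnd
  exact hnd.2.2 _ (h₁.2.1.src_mem_map_src h₁.1) _ (hr.src_mem_map_src (List.cons_ne_nil _ _)) rfl

theorem IsCycleAt.append_ne_append (h₁ : G.IsCycleAt w c₁) (h₂ : G.IsCycleAt w c₂)
    (hne : c₁ ≠ c₂) : c₁ ++ c₂ ≠ c₂ ++ c₁ := by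
  intro h
  have h₁₂ : c₁ <+: c₁ ++ c₂ := List.prefix_append _ _
  have h₂₁ : c₂ <+: c₁ ++ c₂ := h ▸ List.prefix_append _ _
  rcases le_total c₁.length c₂.length with hl | hl
  · exact hne (h₁.eq_of_prefix h₂ (List.prefix_of_prefix_length_le h₁₂ h₂₁ hl))
  · exact hne (h₂.eq_of_prefix h₁ (List.prefix_of_prefix_length_le h₂₁ h₁₂ hl)).symm

open Classical in
noncomputable def pathsIn (G : DMGraph) (A : Finset G.V) (v : G.V) (n : ℕ) : Finset (List G.E) :=
  (List.finite_length_eq G.E n).toFinset.filter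
    fun p => (∃ w, G.Path v w p) ∧ ∀ e ∈ p, G.tgt e ∈ A

open Classical in
noncomputable def closedPaths (G : DMGraph) (v : G.V) (n : ℕ) : Finset (List G.E) :=
  (List.finite_length_eq G.E n).toFinset.filter (G.Path v v)

theorem mem_pathsIn :
    p ∈ G.pathsIn A v n ↔ p.length = n ∧ (∃ w, G.Path v w p) ∧ ∀ e ∈ p, G.tgt e ∈ A := by
  simp [pathsIn]

theorem mem_closedPaths : p ∈ G.closedPaths v n ↔ p.length = n ∧ G.Path v v p := by
  simp [closedPaths]

theorem P_eq_card_pathsIn_univ : G.P v n = (G.pathsIn univ v n).card := by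
  rw [P, ← Nat.card_eq_finsetCard]
  exact Nat.card_congr (Equiv.subtypeEquivRight fun p => by simp [mem_pathsIn])

theorem one_le_P (hout : ∀ v : G.V, ∃ e : G.E, G.src e = v) (v : G.V) (n : ℕ) : 1 ≤ G.P v n := by
  obtain ⟨p, w, hlen, hp⟩ := exists_path hout v n
  rw [P_eq_card_pathsIn_univ, one_le_card]
  exact ⟨p, mem_pathsIn.2 ⟨hlen, ⟨w, hp⟩, fun _ _ => mem_univ _⟩⟩

/-- The blocks `c₁ ++ c₂ ≠ c₂ ++ c₁` are closed at `w` and have the same length, so distinct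
words in them spell distinct paths. -/
theorem IsCycleAt.two_pow_le_P (h₁ : G.IsCycleAt w c₁) (h₂ : G.IsCycleAt w c₂)
    (hne : c₁ ≠ c₂) (k : ℕ) : 2 ^ k ≤ G.P w (k * (c₁.length + c₂.length)) := by
  set block : Bool → List G.E := fun b => bif b then c₁ ++ c₂ else c₂ ++ c₁
  have hpath : ∀ b, G.Path w w (block b) := fun b => by
    cases b
    exacts [h₂.2.1.append h₁.2.1, h₁.2.1.append h₂.2.1]
  have hlen : ∀ b, (block b).length = c₁.length + c₂.length := fun b => by
    cases b <;> simp [block, add_comm]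
  have hinj : block.Injective := fun a b hab => by
    have := h₁.append_ne_append h₂ hne
    cases a <;> cases b <;> simp_all [block, eq_comm]
  rw [P_eq_card_pathsIn_univ]
  calc 2 ^ k = (univ : Finset (Fin k → Bool)).card := by simp
    _ ≤ _ := card_le_card_of_injOn (fun b => (List.ofFn b).flatMap block)
      (fun b _ => mem_pathsIn.2 ⟨by simp [hlen, Function.comp_def, List.ofFn_const],
        ⟨w, Path.flatMap hpath _⟩, fun _ _ => mem_univ _⟩)
      (fun a _ b _ hab => List.ofFn_injective
        (List.eq_of_flatMap_eq hinj (by simp [hlen]) (by simp) hab))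

open Classical in
/-- Cutting a path at its last visit to its start `v`: a closed path at `v`, then an edge leaving
`v` for good, then a path that never returns to `v`. -/
theorem pathsIn_subset :
    G.pathsIn A v n ⊆ G.closedPaths v n ∪ (range n).biUnion fun i =>
      (G.closedPaths v i).biUnion fun c => ({e | G.tgt e ∈ A.erase v} : Finset G.E).biUnion
        fun e => (G.pathsIn (A.erase v) (G.tgt e) (n - 1 - i)).image (c ++ e :: ·) := by
  intro p hp
  obtain ⟨hlen, ⟨w, hp⟩, hA⟩ := mem_pathsIn.1 hp
  obtain ⟨c, _ | ⟨e, q⟩, rfl, hc, hr, hx⟩ := hp.exists_eq_closed_append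
  · exact mem_union_left _ (mem_closedPaths.2 ⟨by simpa using hlen, by simpa using hc⟩)
  have hq := (Path.cons_iff.1 hr).2
  simp only [List.length_append, List.length_cons] at hlen
  refine mem_union_right _ (mem_biUnion.2 ⟨c.length, mem_range.2 (by omega),
    mem_biUnion.2 ⟨c, mem_closedPaths.2 ⟨rfl, hc⟩, mem_biUnion.2 ⟨e, ?_,
      mem_image.2 ⟨q, mem_pathsIn.2 ⟨by omega, ⟨w, hq⟩, fun f hf => ?_⟩, rfl⟩⟩⟩⟩)
  · exact mem_filter.2 ⟨mem_univ e, mem_erase.2 ⟨hx e List.mem_cons_self, hA e (by simp)⟩⟩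
  · exact mem_erase.2 ⟨hx f (List.mem_cons_of_mem _ hf), hA f (by simp [hf])⟩

namespace CyclesDisjoint

variable (H : G.CyclesDisjoint)
include H

/-- An edge from which one can return to its source starts a cycle, so it is the first edge of
the only cycle through its source. -/
theorem edge_eq {f : G.E} (hsrc : G.src e = G.src f) (hp : G.Path (G.tgt e) (G.src e) p)
    (hq : G.Path (G.tgt f) (G.src f) q) : e = f := by
  obtain ⟨p', hp', hnd⟩ := hp.exists_simple
  obtain ⟨q', hq', hnd'⟩ := hq.exists_simple
  have := H _ _ _ (isCycleAt_cons hp' hnd) (hsrc ▸ isCycleAt_cons hq' hnd')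
  exact (List.cons_eq_cons.1 this).1

theorem path_eq {r : List G.E} (hp : G.Path v w p) (hq : G.Path v w q) (hr : G.Path w v r)
    (hlen : p.length = q.length) : p = q := by
  induction hp generalizing q r with
  | nil => exact (List.length_eq_zero_iff.1 hlen.symm).symm
  | @cons e w p hp ih =>
    obtain _ | ⟨f, q⟩ := q
    · simp at hlen
    obtain ⟨hf, hq⟩ := Path.cons_iff.1 hq
    obtain rfl : e = f := H.edge_eq hf.symm (hp.append hr) (hf ▸ hq.append hr)
    rw [ih hq (hr.append ((Path.nil _).cons e)) (by simpa using hlen)]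

theorem card_closedPaths_le_one : (G.closedPaths v n).card ≤ 1 :=
  card_le_one.2 fun p hp q hq => by
    rw [mem_closedPaths] at hp hq
    exact H.path_eq hp.2 hq.2 (Path.nil v) (hp.1.trans hq.1.symm)

theorem card_pathsIn_le (hv : v ∈ A) (n : ℕ) :
    (G.pathsIn A v n).card ≤ ((Fintype.card G.E + 1) * (n + 1)) ^ A.card := by
  classical
  induction A using Finset.strongInduction generalizing v n with
  | H A ih =>
  set K := (Fintype.card G.E + 1) * (n + 1)
  set M := K ^ (A.erase v).card
  have hrest : ∀ i ∈ range n, ∀ e ∈ ({e | G.tgt e ∈ A.erase v} : Finset G.E),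
      (G.pathsIn (A.erase v) (G.tgt e) (n - 1 - i)).card ≤ M := fun i _ e he =>
    (ih _ (erase_ssubset hv) (mem_filter.1 he).2 _).trans
      (Nat.pow_le_pow_left (Nat.mul_le_mul_left _ (by omega)) _)
  have hM : 1 ≤ M := Nat.one_le_pow _ _ (by positivity)
  calc (G.pathsIn A v n).card ≤ 1 + n * (1 * (Fintype.card G.E * M)) := by
        refine (card_le_card pathsIn_subset).trans ((card_union_le _ _).trans
          (add_le_add H.card_closedPaths_le_one ?_))
        refine (card_biUnion_le_card_mul _ _ _ fun i hi => ?_).trans (by rw [card_range])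
        refine (card_biUnion_le_card_mul _ _ _ fun c _ => ?_).trans
          (Nat.mul_le_mul_right _ H.card_closedPaths_le_one)
        refine (card_biUnion_le_card_mul _ _ _ fun e he => card_image_le.trans
          (hrest i hi e he)).trans (Nat.mul_le_mul_right _ (card_le_univ _))
    _ ≤ K * M := by simp only [K]; nlinarith
    _ = K ^ A.card := by rw [← pow_succ', card_erase_add_one hv]

theorem P_le (v : G.V) (n : ℕ) :
    G.P v n ≤ ((Fintype.card G.E + 1) * (n + 1)) ^ Fintype.card G.V := by
  rw [P_eq_card_pathsIn_univ, ← card_univ]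
  exact H.card_pathsIn_le (mem_univ v) n

theorem exists_P_le_mul_pow (v : G.V) :
    ∃ C : ℝ, 0 < C ∧ ∃ d : ℕ, ∀ n : ℕ, 1 ≤ n → (G.P v n : ℝ) ≤ C * (n : ℝ) ^ d := by
  refine ⟨(2 * (Fintype.card G.E + 1)) ^ Fintype.card G.V, by positivity, Fintype.card G.V,
    fun n hn => ?_⟩
  have hn : (1 : ℝ) ≤ n := by exact_mod_cast hn
  calc (G.P v n : ℝ) ≤ ((Fintype.card G.E + 1) * (n + 1) : ℝ) ^ Fintype.card G.V := by
        exact_mod_cast H.P_le v n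
    _ ≤ (2 * (Fintype.card G.E + 1) * n) ^ Fintype.card G.V := by
        gcongr ?_ ^ _
        nlinarith [(Fintype.card G.E).cast_nonneg (α := ℝ)]
    _ = _ := mul_pow _ _ _

end CyclesDisjoint

end DMGraph

/-- Let `G` be a finite directed multigraph in which every vertex has an
outgoing edge.  Then `P(v,n) ^ (1/n) → 1` for every vertex `v` if and only if the cycles
of `G` are pairwise vertex-disjoint; moreover, in that case `P(v,n)` grows at most
polynomially for every vertex `v`. -/
theorem stmt8 (G : DMGraph) (hout : ∀ v : G.V, ∃ e : G.E, G.src e = v) :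
    ((∀ v : G.V,
        Filter.Tendsto (fun n : ℕ => (G.P v n : ℝ) ^ (1 / (n : ℝ)))
          Filter.atTop (nhds 1))
      ↔ (∀ (w : G.V) (c₁ c₂ : List G.E),
          G.IsCycleAt w c₁ → G.IsCycleAt w c₂ → c₁ = c₂))
    ∧
    ((∀ (w : G.V) (c₁ c₂ : List G.E),
        G.IsCycleAt w c₁ → G.IsCycleAt w c₂ → c₁ = c₂) →
      ∀ v : G.V, ∃ C : ℝ, 0 < C ∧ ∃ d : ℕ,
        ∀ n : ℕ, 1 ≤ n → (G.P v n : ℝ) ≤ C * (n : ℝ) ^ d) := by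
  refine ⟨⟨fun hT w c₁ c₂ h₁ h₂ => ?_, fun H v => ?_⟩, DMGraph.CyclesDisjoint.exists_P_le_mul_pow⟩
  · by_contra hne
    have hL : 0 < c₁.length + c₂.length := by have := List.length_pos_iff.2 h₁.1; omega
    have := le_one_of_tendsto_rpow_one_div (hT w) two_pos hL
      fun k => by exact_mod_cast h₁.two_pow_le_P h₂ hne k
    norm_num at this
  · obtain ⟨C, -, d, hC⟩ := DMGraph.CyclesDisjoint.exists_P_le_mul_pow H v
    exact tendsto_rpow_one_div_of_le_mul_pow (fun n => by exact_mod_cast G.one_le_P hout v n) hC
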